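/- Multiset invariants of W_1 and W_2: let m ≥ 2 and let δ=(δ_i)_{1≤i≤m−1} be a profile, with W_1(δ) = {m} ∪ {i : δ_i=−1} ∪ {m−i : δ_i=1} and W_2(δ) = {i+j : i<j, δ_i=δ_j=−1} ∪ {2m−i−j : i<j, δ_i=δ_j=1} ∪ {2m+i−j : i<j, δ_i<δ_j} ∪ {j−i : i<j, δ_i>δ_j} (indices ranging over 1≤i<j≤m−1). Then: (i) #W_1(δ) = m and #W_2(δ) = binom(m−1,2); (ii) Σ_{t∈W_1(δ)} 1/m + Σ_{t∈W_2(δ)} 1/(2m) = (m²+m+2)/(4m); (iii) Σ_{t∈W_1(δ)} t/m + Σ_{t∈W_2(δ)} t/(2m) = (m²−m+4)/4; and hence (iv) Σ_{t∈W_1(δ)} (t/(2m) − 1/4) + Σ_{t∈W_2(δ)} (t/(4m) − 1/4) = 1/4. In particular, these quantities are independent of the profile δ. -/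

import Mathlib

open scoped BigOperators

/-- `δ` is a `±1`-profile on the indices `1, …, h` -/
def IsProfile (h : ℕ) (δ : ℕ → ℤ) : Prop := ∀ i, 1 ≤ i → i ≤ h → δ i = 1 ∨ δ i = -1

/-- the multiset `W_1(δ) = {m} ∪ {i : δ_i = -1} ∪ {m - i : δ_i = 1}` -/
def W1 (m : ℕ) (δ : ℕ → ℤ) : Multiset ℕ :=
  m ::ₘ (Finset.Icc 1 (m - 1)).val.map (fun i => if δ i = -1 then i else m - i)

/-- the multiset
`W_2(δ) = {i+j : i<j, δ_i=δ_j=-1} ∪ {2m-i-j : i<j, δ_i=δ_j=1}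
          ∪ {2m+i-j : i<j, δ_i<δ_j} ∪ {j-i : i<j, δ_i>δ_j}`,
where `1 ≤ i < j ≤ m-1` -/
def W2 (m : ℕ) (δ : ℕ → ℤ) : Multiset ℕ :=
  ((((Finset.Icc 1 (m - 1)) ×ˢ (Finset.Icc 1 (m - 1))).filter
      (fun q => q.1 < q.2)).val).map
    (fun q =>
      if δ q.1 = -1 ∧ δ q.2 = -1 then q.1 + q.2
      else if δ q.1 = 1 ∧ δ q.2 = 1 then 2 * m - q.1 - q.2
      else if δ q.1 < δ q.2 then 2 * m + q.1 - q.2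
      else q.2 - q.1)

/-!
Every entry of `W_1(δ)` and `W_2(δ)` is an affine function of the signs: the entry of index `i`
is `m/2 - δ_i (2i - m)/2` and the entry of the pair `i < j` is `m - δ_i i + δ_j (m - j)`.
An index `i` is the smaller element of `m - 1 - i` pairs and the larger one of `i - 1`, so the
sign-dependent part of `Σ W_2` is `Σ δ_i (2i - m)`, exactly `-2` times that of `Σ W_1`.
Hence `Σ W_1 + Σ W_2 / 2` does not depend on `δ`, and the cardinalities count indices and pairs.
-/

open Finset

section PairSums

variable {α M : Type*} [LinearOrder α] [AddCommMonoid M] (s : Finset α)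

theorem sum_product_filter_lt_fst (f : α → M) :
    ∑ q ∈ s ×ˢ s with q.1 < q.2, f q.1 = ∑ i ∈ s, #{j ∈ s | i < j} • f i := by
  rw [sum_filter, sum_product]
  refine sum_congr rfl fun i _ => ?_
  simp only [← sum_filter, sum_const]

theorem sum_product_filter_lt_snd (g : α → M) :
    ∑ q ∈ s ×ˢ s with q.1 < q.2, g q.2 = ∑ j ∈ s, #{i ∈ s | i < j} • g j := by
  rw [sum_filter, sum_product_right]
  refine sum_congr rfl fun j _ => ?_
  simp only [← sum_filter, sum_const]

end PairSums

theorem card_Icc_one_filter_gt (n i : ℕ) : #{j ∈ Icc 1 n | i < j} = n - i := by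
  rw [show {j ∈ Icc 1 n | i < j} = Ioc i n by ext; simp; omega, Nat.card_Ioc]

theorem card_Icc_one_filter_lt {n i : ℕ} (hi : i ≤ n + 1) :
    #{j ∈ Icc 1 n | j < i} = i - 1 := by
  rw [show {j ∈ Icc 1 n | j < i} = Ico 1 i by ext; simp; omega, Nat.card_Ico]

theorem cast_W1_entry {d : ℤ} (hd : d = 1 ∨ d = -1) {m i : ℕ} (hi : i ≤ m) :
    (((if d = -1 then i else m - i : ℕ)) : ℝ) = (m - d * (2 * i - m)) / 2 := by
  rcases hd with rfl | rfl
  · norm_num [Nat.cast_sub hi]; ring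
  · norm_num

theorem cast_W2_entry {d e : ℤ} (hd : d = 1 ∨ d = -1) (he : e = 1 ∨ e = -1) {m i j : ℕ}
    (hij : i ≤ j) (hj : j ≤ m) :
    (((if d = -1 ∧ e = -1 then i + j else if d = 1 ∧ e = 1 then 2 * m - i - j
      else if d < e then 2 * m + i - j else j - i : ℕ)) : ℝ) = m - d * i + e * (m - j) := by
  rcases hd with rfl | rfl <;> rcases he with rfl | rfl <;>
    norm_num [Nat.cast_sub, hij, show i ≤ 2 * m by omega, show j ≤ 2 * m - i by omega,
      show j ≤ 2 * m + i by omega] <;> ring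

def signedMoment (m : ℕ) (δ : ℕ → ℤ) : ℝ := ∑ i ∈ Icc 1 (m - 1), (δ i : ℝ) * (2 * i - m)

theorem card_W1 {m : ℕ} (hm : 1 ≤ m) (δ : ℕ → ℤ) : Multiset.card (W1 m δ) = m := by
  rw [W1, Multiset.card_cons, Multiset.card_map, card_val, Nat.card_Icc]
  omega

theorem card_W2 (m : ℕ) (δ : ℕ → ℤ) : Multiset.card (W2 m δ) = (m - 1).choose 2 := by
  rw [W2, Multiset.card_map, card_val, card_product_filter_lt, Nat.card_Icc,
    Nat.add_sub_cancel]

section Profile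

variable {m : ℕ} {δ : ℕ → ℤ}

theorem sum_cast_W1 (hδ : IsProfile (m - 1) δ) :
    ((W1 m δ).map (Nat.cast : ℕ → ℝ)).sum
      = m + ((m - 1 : ℕ) : ℝ) * m / 2 - signedMoment m δ / 2 := by
  rw [W1, Multiset.map_cons, Multiset.sum_cons, Multiset.map_map, ← sum_eq_multiset_sum]
  simp only [Function.comp_apply]
  rw [sum_congr rfl fun i hi => cast_W1_entry (hδ i (mem_Icc.1 hi).1 (mem_Icc.1 hi).2)
      (by have := (mem_Icc.1 hi).2; omega),
    signedMoment, ← sum_div, sum_sub_distrib, sum_const, Nat.card_Icc, nsmul_eq_mul,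
    Nat.add_sub_cancel]
  ring

theorem sum_cast_W2 (hδ : IsProfile (m - 1) δ) :
    ((W2 m δ).map (Nat.cast : ℕ → ℝ)).sum
      = ((m - 1).choose 2 : ℕ) * m + signedMoment m δ := by
  rw [W2, Multiset.map_map, ← sum_eq_multiset_sum]
  simp only [Function.comp_apply]
  rw [sum_congr rfl fun q hq => by
    obtain ⟨hq, hlt⟩ := mem_filter.1 hq
    obtain ⟨hi, hj⟩ := mem_product.1 hq
    exact cast_W2_entry (hδ _ (mem_Icc.1 hi).1 (mem_Icc.1 hi).2)
      (hδ _ (mem_Icc.1 hj).1 (mem_Icc.1 hj).2) hlt.le (by have := (mem_Icc.1 hj).2; omega)]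
  rw [sum_add_distrib, sum_sub_distrib, sum_const, card_product_filter_lt, Nat.card_Icc,
    Nat.add_sub_cancel, nsmul_eq_mul, sum_product_filter_lt_fst _ (fun i => (δ i : ℝ) * i),
    sum_product_filter_lt_snd _ (fun j => (δ j : ℝ) * (m - j)), sub_add_eq_add_sub,
    add_sub_assoc, ← sum_sub_distrib, signedMoment]
  congr 1
  refine sum_congr rfl fun i hi => ?_
  obtain ⟨hi1, him⟩ := mem_Icc.1 hi
  rw [card_Icc_one_filter_gt, card_Icc_one_filter_lt (by omega), nsmul_eq_mul, nsmul_eq_mul,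
    Nat.cast_sub hi1, Nat.cast_sub him, Nat.cast_sub (by omega : 1 ≤ m)]
  push_cast
  ring

theorem sum_cast_W1_add_half_sum_cast_W2 (hm : 1 ≤ m) (hδ : IsProfile (m - 1) δ) :
    ((W1 m δ).map (Nat.cast : ℕ → ℝ)).sum + ((W2 m δ).map (Nat.cast : ℕ → ℝ)).sum / 2
      = m * (m ^ 2 - m + 4) / 4 := by
  rw [sum_cast_W1 hδ, sum_cast_W2 hδ, Nat.cast_choose_two, Nat.cast_sub hm, Nat.cast_one]
  ring

end Profile

/-- **Multiset invariants of `W_1` and `W_2`** (Section 5): for `m ≥ 2` and a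
profile `δ = (δ_1, …, δ_{m-1})`:
(i) `#W_1(δ) = m` and `#W_2(δ) = C(m-1, 2)`;
(ii) `Σ_{t ∈ W_1} 1/m + Σ_{t ∈ W_2} 1/(2m) = (m²+m+2)/(4m)`;
(iii) `Σ_{t ∈ W_1} t/m + Σ_{t ∈ W_2} t/(2m) = (m²-m+4)/4`;
(iv) `Σ_{t ∈ W_1} (t/(2m) - 1/4) + Σ_{t ∈ W_2} (t/(4m) - 1/4) = 1/4`.
In particular these quantities do not depend on the profile `δ`. -/
theorem W1_W2_invariants (m : ℕ) (hm : 2 ≤ m) (δ : ℕ → ℤ)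
    (hδ : IsProfile (m - 1) δ) :
    Multiset.card (W1 m δ) = m ∧
    Multiset.card (W2 m δ) = (m - 1).choose 2 ∧
    ((W1 m δ).map (fun _ => 1 / (m : ℝ))).sum +
        ((W2 m δ).map (fun _ => 1 / (2 * (m : ℝ)))).sum
      = ((m : ℝ) ^ 2 + m + 2) / (4 * m) ∧
    ((W1 m δ).map (fun t => (t : ℝ) / m)).sum +
        ((W2 m δ).map (fun t => (t : ℝ) / (2 * m))).sum
      = ((m : ℝ) ^ 2 - m + 4) / 4 ∧
    ((W1 m δ).map (fun t => (t : ℝ) / (2 * m) - 1 / 4)).sum +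
        ((W2 m δ).map (fun t => (t : ℝ) / (4 * m) - 1 / 4)).sum
      = 1 / 4 := by
  have hm0 : (m : ℝ) ≠ 0 := by positivity
  have hm1 : 1 ≤ m := by omega
  have hC : (((m - 1).choose 2 : ℕ) : ℝ) = (m - 1) * (m - 2) / 2 := by
    rw [Nat.cast_choose_two, Nat.cast_sub hm1, Nat.cast_one]
    ring
  have hsum := sum_cast_W1_add_half_sum_cast_W2 hm1 hδ
  -- In the statement `(t : ℝ)` coerces the whole multiset `W1 m δ` to `Multiset ℝ`;
  -- `bind_singleton` turns that coercion back into `map Nat.cast`.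
  refine ⟨card_W1 hm1 δ, card_W2 m δ, ?_, ?_, ?_⟩ <;>
    simp only [Multiset.pure_def, Multiset.bind_def, Multiset.bind_singleton, Multiset.map_id',
      Multiset.sum_map_sub, Multiset.sum_map_div, Multiset.map_const', Multiset.sum_replicate,
      Multiset.card_map, card_W1 hm1, card_W2, nsmul_eq_mul, hC] <;>
    field_simp
  · ring
  · linear_combination 8 * hsum
  · linear_combination 4 * hsum
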